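/- Let M > 0 and A ≠ 0 be real constants (A the Kerr rotation parameter). Consider the Kerr metric in Boyer–Lindquist coordinates (t,r,θ,φ), with ρ² = r² + A² cos²θ, Σ = r² + A² − 2Mr, and nonzero components g_{tt} = 1 − 2Mr/ρ², g_{rr} = −ρ²/Σ, g_{θθ} = −ρ², g_{tφ} = g_{φt} = 2MrA sin²θ/ρ², g_{φφ} = −[(r² + A²) sin²θ + 2MrA² sin⁴θ/ρ²], on an open set W ⊆ ℝ⁴ of coordinate values on which ρ² ≠ 0, Σ ≠ 0 and g_{φφ} > 0. Define the vector field v^μ = (0, 0, 0, (g_{φφ})^{−1/2}) on W. Then: (i) Σ_{μ,ν} g_{μν} v^μ v^ν = 1; (ii) the acceleration a_μ = Σ_ν v^ν (∂_ν v_μ − Σ_ε Γ^ε_{μν} v_ε) equals the gradient a_μ = ∂_μ Ψ with Ψ = −(1/2) ln(g_{φφ}); and (iii) at points of W with θ = π/2 one has g_{φφ} = −(r² + A² + 2MA²/r), Ψ = −(1/2) ln(−(r² + A² + 2MA²/r)), and a_μ = (0, −(r³ − MA²)/(r⁴ + r²A² + 2MrA²), 0, 0). -/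

import Mathlib

open scoped BigOperators

/-- Partial derivative with respect to the μ-th coordinate of ℝ⁴. -/
noncomputable def pd (μ : Fin 4) (f : (Fin 4 → ℝ) → ℝ) (x : Fin 4 → ℝ) : ℝ :=
  fderiv ℝ f x (Pi.single μ 1)

/-- Christoffel symbols `Γ^ε_{μν}` of a metric field `g`. -/
noncomputable def christoffel (g : (Fin 4 → ℝ) → Matrix (Fin 4) (Fin 4) ℝ)
    (ε μ ν : Fin 4) (x : Fin 4 → ℝ) : ℝ :=
  (1 / 2) * ∑ α, (g x)⁻¹ ε α *
    (pd ν (fun y => g y α μ) x + pd μ (fun y => g y α ν) x - pd α (fun y => g y μ ν) x)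

/-- Covariant components `v_μ = g_{μν} v^ν` of a vector field. -/
noncomputable def vlow (g : (Fin 4 → ℝ) → Matrix (Fin 4) (Fin 4) ℝ)
    (v : (Fin 4 → ℝ) → Fin 4 → ℝ) (μ : Fin 4) (x : Fin 4 → ℝ) : ℝ :=
  ∑ ν, g x μ ν * v x ν

/-- Acceleration covector `a_μ = v^ν (∂_ν v_μ − Γ^ε_{μν} v_ε)` of a vector field. -/
noncomputable def accel (g : (Fin 4 → ℝ) → Matrix (Fin 4) (Fin 4) ℝ)
    (v : (Fin 4 → ℝ) → Fin 4 → ℝ) (μ : Fin 4) (x : Fin 4 → ℝ) : ℝ :=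
  ∑ ν, v x ν * (pd ν (vlow g v μ) x - ∑ ε, christoffel g ε μ ν x * vlow g v ε x)

/-- `ρ² = r² + A² cos²θ` in Boyer–Lindquist coordinates (t, r, θ, φ) = (x⁰, x¹, x², x³). -/
noncomputable def ρ2 (A : ℝ) (x : Fin 4 → ℝ) : ℝ :=
  (x 1) ^ 2 + A ^ 2 * Real.cos (x 2) ^ 2

/-- `Σ = r² + A² − 2Mr`. -/
noncomputable def SigK (M A : ℝ) (x : Fin 4 → ℝ) : ℝ :=
  (x 1) ^ 2 + A ^ 2 - 2 * M * x 1

/-- The Kerr metric in Boyer–Lindquist coordinates (t, r, θ, φ) = (x⁰, x¹, x², x³). -/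
noncomputable def gKerr (M A : ℝ) (x : Fin 4 → ℝ) : Matrix (Fin 4) (Fin 4) ℝ :=
  !![1 - 2 * M * x 1 / ρ2 A x, 0, 0, 2 * M * x 1 * A * Real.sin (x 2) ^ 2 / ρ2 A x;
     0, -(ρ2 A x) / SigK M A x, 0, 0;
     0, 0, -(ρ2 A x), 0;
     2 * M * x 1 * A * Real.sin (x 2) ^ 2 / ρ2 A x, 0, 0,
       -(((x 1) ^ 2 + A ^ 2) * Real.sin (x 2) ^ 2
           + 2 * M * x 1 * A ^ 2 * Real.sin (x 2) ^ 4 / ρ2 A x)]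

/-- The circular observer `v^μ = (0, 0, 0, (g_{φφ})^{−1/2})` in the region `g_{φφ} > 0`. -/
noncomputable def vKerr (M A : ℝ) (x : Fin 4 → ℝ) : Fin 4 → ℝ :=
  ![0, 0, 0, (Real.sqrt (gKerr M A x 3 3))⁻¹]

/-! The metric does not depend on `φ`, so `∂_φ` is a Killing coordinate field. For the unit field
`v = g_φφ^{-1/2} ∂_φ` the term `∂_φ v_μ` vanishes, and contracting the Christoffel symbols with
`v_ε = g_εφ v^φ` collapses, through `g⁻¹ g = 1`, to the lowered symbol `Γ_φμφ = ∂_μ g_φφ / 2`.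
Hence `a_μ = -(1/2) g_φφ⁻¹ ∂_μ g_φφ = ∂_μ (-(1/2) ln g_φφ)`. On the equatorial plane
`∂_θ g_φφ = 0` by the reflection symmetry `θ ↦ π - θ`, so only the radial derivative survives. -/

open Real

theorem Matrix.IsSymm.sum_inv_apply_mul_apply {n R : Type*} [Fintype n] [DecidableEq n]
    [CommRing R] {B : Matrix n n R} (hB : B.IsSymm) (hdet : IsUnit B.det) (i j : n) :
    ∑ k, B⁻¹ k i * B k j = (1 : Matrix n n R) i j := by
  rw [← Matrix.nonsing_inv_mul _ hdet, Matrix.mul_apply]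
  simp_rw [hB.inv.apply i]

section LineDerivative

variable {F : (Fin 4 → ℝ) → ℝ} {μ : Fin 4} {x : Fin 4 → ℝ}

lemma pd_eq_deriv_line (hF : DifferentiableAt ℝ F x) :
    pd μ F x = deriv (fun t : ℝ => F (x + t • Pi.single μ 1)) 0 :=
  hF.lineDeriv_eq_fderiv.symm

lemma pd_eq_zero_of_line_const (h : ∀ t : ℝ, F (x + t • Pi.single μ 1) = F x) :
    pd μ F x = 0 := by
  by_cases hF : DifferentiableAt ℝ F x
  · simp [pd_eq_deriv_line hF, h]
  · simp [pd, fderiv_zero_of_not_differentiableAt hF]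

lemma pd_eq_zero_of_line_even (hF : DifferentiableAt ℝ F x)
    (h : ∀ t : ℝ, F (x + t • Pi.single μ 1) = F (x - t • Pi.single μ 1)) : pd μ F x = 0 := by
  set φ := fun t : ℝ => F (x + t • Pi.single μ 1)
  have heven : (fun t => φ (-t)) = φ := by
    funext t
    simp only [φ, neg_smul, ← sub_eq_add_neg, ← h]
  have h0 : deriv φ 0 = -deriv φ 0 := by
    simpa using (congrArg (deriv · 0) heven).symm.trans (deriv_comp_neg φ 0)
  rw [pd_eq_deriv_line hF]
  linarith

lemma pd_neg_half_log (hF : DifferentiableAt ℝ F x) (hx : F x ≠ 0) :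
    pd μ (fun y => -(1 / 2) * log (F y)) x = -(1 / 2) * (F x)⁻¹ * pd μ F x := by
  have := (hF.hasFDerivAt.log hx).const_mul (-(1 / 2))
  simp only [pd, this.fderiv]
  simp [mul_assoc]

end LineDerivative

noncomputable def normalizedCoordField (g : (Fin 4 → ℝ) → Matrix (Fin 4) (Fin 4) ℝ) (k : Fin 4)
    (y : Fin 4 → ℝ) : Fin 4 → ℝ :=
  Pi.single k (√(g y k k))⁻¹

section NormalizedCoordField

variable {g : (Fin 4 → ℝ) → Matrix (Fin 4) (Fin 4) ℝ} {k : Fin 4} {x : Fin 4 → ℝ}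

lemma vlow_normalizedCoordField (μ : Fin 4) (y : Fin 4 → ℝ) :
    vlow g (normalizedCoordField g k) μ y = g y μ k * (√(g y k k))⁻¹ := by
  simp [vlow, normalizedCoordField, Pi.single_apply]

lemma normalizedCoordField_norm_sq (hpos : 0 < g x k k) :
    ∑ μ, ∑ ν, g x μ ν * normalizedCoordField g k x μ * normalizedCoordField g k x ν = 1 := by
  simp only [normalizedCoordField, Pi.single_apply, mul_ite, mul_zero, ite_mul, zero_mul,
    Finset.sum_ite_eq', Finset.mem_univ, ↓reduceIte]
  rw [mul_assoc, ← sq, inv_pow, sq_sqrt hpos.le, mul_inv_cancel₀ hpos.ne']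

lemma accel_normalizedCoordField (hsymm : (g x).IsSymm) (hdet : IsUnit (g x).det)
    (hline : ∀ t : ℝ, g (x + t • Pi.single k 1) = g x) (hpos : 0 < g x k k) (μ : Fin 4) :
    accel g (normalizedCoordField g k) μ x = -(1 / 2) * (g x k k)⁻¹ * pd μ (fun y => g y k k) x := by
  have hpd_k : ∀ α β : Fin 4, pd k (fun y => g y α β) x = 0 := fun α β =>
    pd_eq_zero_of_line_const fun t => by rw [hline]
  have hpd_vlow : pd k (vlow g (normalizedCoordField g k) μ) x = 0 :=
    pd_eq_zero_of_line_const fun t => by simp only [vlow_normalizedCoordField, hline]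
  have hchristoffel : ∑ ε, christoffel g ε μ k x * vlow g (normalizedCoordField g k) ε x
      = (1 / 2) * (√(g x k k))⁻¹ * pd μ (fun y => g y k k) x := by
    calc _ = (1 / 2) * (√(g x k k))⁻¹ * ∑ α, (∑ ε, (g x)⁻¹ ε α * g x ε k) *
            (pd k (fun y => g y α μ) x + pd μ (fun y => g y α k) x - pd α (fun y => g y μ k) x) := by
          simp only [christoffel, vlow_normalizedCoordField, Finset.mul_sum, Finset.sum_mul]
          rw [Finset.sum_comm]
          exact Finset.sum_congr rfl fun α _ => Finset.sum_congr rfl fun ε _ => by ring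
      _ = (1 / 2) * (√(g x k k))⁻¹ *
            (pd k (fun y => g y k μ) x + pd μ (fun y => g y k k) x - pd k (fun y => g y μ k) x) := by
          simp [hsymm.sum_inv_apply_mul_apply hdet, Matrix.one_apply]
      _ = _ := by rw [hpd_k, hpd_k]; ring
  have hsqrt : ((√(g x k k))⁻¹) ^ 2 = (g x k k)⁻¹ := by rw [inv_pow, sq_sqrt hpos.le]
  rw [accel, Fintype.sum_eq_single k fun ν hν => by simp [normalizedCoordField, hν], hpd_vlow,
    hchristoffel, normalizedCoordField, Pi.single_eq_same, ← hsqrt]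
  ring

theorem accel_normalizedCoordField_eq_pd_log (hsymm : (g x).IsSymm) (hdet : IsUnit (g x).det)
    (hline : ∀ t : ℝ, g (x + t • Pi.single k 1) = g x) (hpos : 0 < g x k k)
    (hdiff : DifferentiableAt ℝ (fun y => g y k k) x) (μ : Fin 4) :
    accel g (normalizedCoordField g k) μ x = pd μ (fun y => -(1 / 2) * log (g y k k)) x := by
  rw [accel_normalizedCoordField hsymm hdet hline hpos, pd_neg_half_log hdiff hpos.ne']

end NormalizedCoordField

section Kerr

variable {M A : ℝ} {x : Fin 4 → ℝ}

lemma vKerr_eq_normalizedCoordField : vKerr M A = normalizedCoordField (gKerr M A) 3 := by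
  funext y i
  fin_cases i <;> simp [vKerr, normalizedCoordField]

lemma gKerr_isSymm : (gKerr M A x).IsSymm := by
  ext i j
  fin_cases i <;> fin_cases j <;> simp [gKerr]

lemma gKerr_congr {y : Fin 4 → ℝ} (h1 : y 1 = x 1) (h2 : sin (y 2) ^ 2 = sin (x 2) ^ 2) :
    gKerr M A y = gKerr M A x := by
  have h4 : ∀ z : Fin 4 → ℝ, sin (z 2) ^ 4 = (sin (z 2) ^ 2) ^ 2 := fun z => by ring
  simp only [gKerr, ρ2, SigK, cos_sq', h4, h1, h2]

lemma gKerr_add_smul_single {μ : Fin 4} (h1 : μ ≠ 1) (h2 : μ ≠ 2) (t : ℝ) :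
    gKerr M A (x + t • Pi.single μ 1) = gKerr M A x :=
  gKerr_congr (by simp [h1.symm]) (by simp [h2.symm])

lemma gKerr_33_eq (y : Fin 4 → ℝ) : gKerr M A y 3 3 =
    -(((y 1) ^ 2 + A ^ 2) * sin (y 2) ^ 2 + 2 * M * y 1 * A ^ 2 * sin (y 2) ^ 4 / ρ2 A y) :=
  rfl

lemma gKerr_33_eq_of_equatorial {y : Fin 4 → ℝ} (h : y 2 = π / 2) :
    gKerr M A y 3 3 = -((y 1) ^ 2 + A ^ 2 + 2 * M * A ^ 2 / y 1) := by
  rw [gKerr_33_eq, ρ2, h, sin_pi_div_two, cos_pi_div_two]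
  rcases eq_or_ne (y 1) 0 with hr | hr
  · simp [hr]
  · field_simp
    ring

lemma differentiableAt_gKerr_33 (hρ : ρ2 A x ≠ 0) :
    DifferentiableAt ℝ (fun y => gKerr M A y 3 3) x := by
  simp only [gKerr_33_eq]
  unfold ρ2 at hρ ⊢
  fun_prop (disch := assumption)

lemma det_gKerr (hρ : ρ2 A x ≠ 0) (hSig : SigK M A x ≠ 0) :
    (gKerr M A x).det = -(ρ2 A x ^ 2 * sin (x 2) ^ 2) := by
  have hsucc : Fin.succAbove (3 : Fin 4) 2 = 2 := rfl
  simp only [gKerr, Matrix.det_succ_row_zero, Matrix.of_apply, Matrix.submatrix_apply,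
    Matrix.cons_val, Matrix.det_unique, Fin.default_eq_zero, Fin.reduceSucc, Fin.sum_univ_succ,
    Fin.coe_ofNat_eq_mod, Fin.zero_succAbove, ne_eq, Fin.succ_ne_zero, not_false_eq_true,
    Fin.succAbove_ne_zero_zero, Fin.succ_succAbove_one, hsucc]
  field_simp
  simp only [ρ2, SigK, cos_sq']
  ring

lemma isUnit_det_gKerr (hρ : ρ2 A x ≠ 0) (hSig : SigK M A x ≠ 0) (hpos : 0 < gKerr M A x 3 3) :
    IsUnit (gKerr M A x).det := by
  have hsin : sin (x 2) ≠ 0 := fun hs => by simp [gKerr_33_eq, hs] at hpos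
  rw [det_gKerr hρ hSig]
  exact (neg_ne_zero.2 (mul_ne_zero (pow_ne_zero 2 hρ) (pow_ne_zero 2 hsin))).isUnit

lemma pd_gKerr_of_ne {μ : Fin 4} (h1 : μ ≠ 1) (h2 : μ ≠ 2) (α β : Fin 4) :
    pd μ (fun y => gKerr M A y α β) x = 0 :=
  pd_eq_zero_of_line_const fun t => by rw [gKerr_add_smul_single h1 h2]

lemma pd_one_gKerr_33_of_equatorial (hθ : x 2 = π / 2) (hr : x 1 ≠ 0) :
    pd 1 (fun y => gKerr M A y 3 3) x = -(2 * x 1 - 2 * M * A ^ 2 / x 1 ^ 2) := by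
  have hρ : ρ2 A x ≠ 0 := by simpa [ρ2, hθ] using hr
  have hline : (fun t : ℝ => gKerr M A (x + t • Pi.single 1 1) 3 3)
      = fun t => -((x 1 + t) ^ 2 + A ^ 2 + 2 * M * A ^ 2 / (x 1 + t)) := by
    funext t
    rw [gKerr_33_eq_of_equatorial (by simp [hθ])]
    simp
  have hr' : x 1 + 0 ≠ 0 := by simpa using hr
  have hshift := (hasDerivAt_id' (0 : ℝ)).const_add (x 1)
  have hderiv : HasDerivAt (fun t => -((x 1 + t) ^ 2 + A ^ 2 + 2 * M * A ^ 2 / (x 1 + t)))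
      (-(2 * x 1 - 2 * M * A ^ 2 / x 1 ^ 2)) 0 :=
    (((hshift.pow 2).add_const (A ^ 2)).add
      ((hasDerivAt_const (0 : ℝ) (2 * M * A ^ 2)).div hshift hr')).neg.congr_deriv (by norm_num; ring)
  rw [pd_eq_deriv_line (differentiableAt_gKerr_33 hρ), hline, hderiv.deriv]

lemma pd_two_gKerr_33_of_equatorial (hθ : x 2 = π / 2) (hρ : ρ2 A x ≠ 0) :
    pd 2 (fun y => gKerr M A y 3 3) x = 0 :=
  pd_eq_zero_of_line_even (differentiableAt_gKerr_33 hρ) fun t =>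
    congrArg (· 3 3) (gKerr_congr (by simp) (by simp [hθ, sin_add, sin_sub]))

lemma accel_vKerr_of_equatorial (hθ : x 2 = π / 2) (hρ : ρ2 A x ≠ 0) (hSig : SigK M A x ≠ 0)
    (hpos : 0 < gKerr M A x 3 3) (μ : Fin 4) :
    accel (gKerr M A) (vKerr M A) μ x = ![0, -((x 1) ^ 3 - M * A ^ 2) /
      ((x 1) ^ 4 + (x 1) ^ 2 * A ^ 2 + 2 * M * x 1 * A ^ 2), 0, 0] μ := by
  have hr : x 1 ≠ 0 := fun h => hρ (by simp [ρ2, hθ, h])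
  have hg : (x 1) ^ 2 + A ^ 2 + 2 * M * A ^ 2 / x 1 ≠ 0 :=
    neg_ne_zero.1 (gKerr_33_eq_of_equatorial hθ ▸ hpos.ne')
  rw [vKerr_eq_normalizedCoordField, accel_normalizedCoordField gKerr_isSymm
    (isUnit_det_gKerr hρ hSig hpos) (gKerr_add_smul_single (by decide) (by decide)) hpos]
  fin_cases μ
  · simp [pd_gKerr_of_ne (μ := 0) (by decide) (by decide)]
  · have hden : (x 1) ^ 4 + (x 1) ^ 2 * A ^ 2 + 2 * M * x 1 * A ^ 2
        = (x 1) ^ 2 * ((x 1) ^ 2 + A ^ 2 + 2 * M * A ^ 2 / x 1) := by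
      field_simp
    change -(1 / 2) * _ * pd 1 _ x = -((x 1) ^ 3 - M * A ^ 2) / _
    rw [pd_one_gKerr_33_of_equatorial hθ hr, gKerr_33_eq_of_equatorial hθ, hden]
    field_simp
  · simp [pd_two_gKerr_33_of_equatorial hθ hρ]
  · simp [pd_gKerr_of_ne (μ := 3) (by decide) (by decide)]

end Kerr

theorem kerr_circular_observer_acceleration_general (M A : ℝ)
    (W : Set (Fin 4 → ℝ))
    (hρ : ∀ x ∈ W, ρ2 A x ≠ 0) (hSig : ∀ x ∈ W, SigK M A x ≠ 0)
    (hφφ : ∀ x ∈ W, 0 < gKerr M A x 3 3) :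
    ∀ x ∈ W,
      (∑ μ, ∑ ν, gKerr M A x μ ν * vKerr M A x μ * vKerr M A x ν = 1) ∧
      (∀ μ : Fin 4, accel (gKerr M A) (vKerr M A) μ x
          = pd μ (fun y => -(1 / 2) * Real.log (gKerr M A y 3 3)) x) ∧
      (x 2 = Real.pi / 2 →
        gKerr M A x 3 3 = -((x 1) ^ 2 + A ^ 2 + 2 * M * A ^ 2 / x 1) ∧
        -(1 / 2) * Real.log (gKerr M A x 3 3)
          = -(1 / 2) * Real.log (-((x 1) ^ 2 + A ^ 2 + 2 * M * A ^ 2 / x 1)) ∧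
        (∀ μ : Fin 4, accel (gKerr M A) (vKerr M A) μ x
            = ![0, -((x 1) ^ 3 - M * A ^ 2) /
                  ((x 1) ^ 4 + (x 1) ^ 2 * A ^ 2 + 2 * M * x 1 * A ^ 2), 0, 0] μ)) := by
  intro x hx
  have hpos := hφφ x hx
  have hdet := isUnit_det_gKerr (hρ x hx) (hSig x hx) hpos
  refine ⟨?_, fun μ => ?_, fun hθ => ⟨gKerr_33_eq_of_equatorial hθ,
    by rw [gKerr_33_eq_of_equatorial hθ], accel_vKerr_of_equatorial hθ (hρ x hx) (hSig x hx) hpos⟩⟩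
  · rw [vKerr_eq_normalizedCoordField]
    exact normalizedCoordField_norm_sq hpos
  · rw [vKerr_eq_normalizedCoordField]
    exact accel_normalizedCoordField_eq_pd_log gKerr_isSymm hdet
      (gKerr_add_smul_single (by decide) (by decide)) hpos (differentiableAt_gKerr_33 (hρ x hx)) μ

/-- In the region of closed time-like curves of Kerr space-time (`g_{φφ} > 0`), the circular
observer is unit-normalized, its acceleration is the gradient of `Ψ = −(1/2)ln g_{φφ}`, and
on the equatorial plane `θ = π/2` it takes the stated explicit form. -/
theorem kerr_circular_observer_acceleration (M A : ℝ) (hM : 0 < M) (hA : A ≠ 0)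
    (W : Set (Fin 4 → ℝ)) (hW : IsOpen W)
    (hρ : ∀ x ∈ W, ρ2 A x ≠ 0) (hSig : ∀ x ∈ W, SigK M A x ≠ 0)
    (hφφ : ∀ x ∈ W, 0 < gKerr M A x 3 3) :
    ∀ x ∈ W,
      (∑ μ, ∑ ν, gKerr M A x μ ν * vKerr M A x μ * vKerr M A x ν = 1) ∧
      (∀ μ : Fin 4, accel (gKerr M A) (vKerr M A) μ x
          = pd μ (fun y => -(1 / 2) * Real.log (gKerr M A y 3 3)) x) ∧
      (x 2 = Real.pi / 2 →
        gKerr M A x 3 3 = -((x 1) ^ 2 + A ^ 2 + 2 * M * A ^ 2 / x 1) ∧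
        -(1 / 2) * Real.log (gKerr M A x 3 3)
          = -(1 / 2) * Real.log (-((x 1) ^ 2 + A ^ 2 + 2 * M * A ^ 2 / x 1)) ∧
        (∀ μ : Fin 4, accel (gKerr M A) (vKerr M A) μ x
            = ![0, -((x 1) ^ 3 - M * A ^ 2) /
                  ((x 1) ^ 4 + (x 1) ^ 2 * A ^ 2 + 2 * M * x 1 * A ^ 2), 0, 0] μ)) :=
  kerr_circular_observer_acceleration_general M A W hρ hSig hφφ
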